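/- arXiv:1811.12824 — 2 statements merged into one kernel-verified Lean document; each statement's English description precedes it below -/
import Mathlib

section
/- Let X ~ Bin(k, r/n) and Y ~ Bin(n−k, r/n) be independent, and define p_-(r) := Pr(X > Y), p_0(r) := Pr(X = Y), and p'(r) := Pr(Y = 0). For every constant c > 0 and every ε > 0 there exist constants C, δ, n0 > 0 such that for all n ≥ n0, all λ with C ln n ≤ λ ≤ n^c, all k with 0 < k ≤ 3n/λ, and all r with 0 < r ≤ δ·λ^{1/4}: (1−ε)·(kr/n)·e^{−r} < p_-(r) < (1+ε)·(kr/n)·e^{−r}, (1−ε)·e^{−r} < p_0(r) < (1+ε)·e^{−r}, and (1−ε)·e^{−r} < p'(r) < (1+ε)·e^{−r}. -/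
open scoped BigOperators

namespace BinomialEstimates

/-- `binP m p a = Pr(Bin(m,p) = a)`, the binomial probability mass function. -/
noncomputable def binP (m : ℕ) (p : ℝ) (a : ℕ) : ℝ :=
  (m.choose a : ℝ) * p ^ a * (1 - p) ^ (m - a)

/-- `Pr(X > Y)` for independent `X ~ Bin(k, p)` and `Y ~ Bin(n−k, p)`. -/
noncomputable def pMinus (n k : ℕ) (p : ℝ) : ℝ :=
  ∑ a ∈ Finset.range (k + 1), ∑ b ∈ Finset.range (n - k + 1),
    if b < a then binP k p a * binP (n - k) p b else 0

/-- `Pr(X = Y)` for independent `X ~ Bin(k, p)` and `Y ~ Bin(n−k, p)`. -/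
noncomputable def pZero (n k : ℕ) (p : ℝ) : ℝ :=
  ∑ a ∈ Finset.range (k + 1), ∑ b ∈ Finset.range (n - k + 1),
    if b = a then binP k p a * binP (n - k) p b else 0

/-- `Pr(Y = 0)` for `Y ~ Bin(n−k, p)`. -/
noncomputable def pPrime (n k : ℕ) (p : ℝ) : ℝ := binP (n - k) p 0

/-! With `p = r/n`, the quantities `kp`, `kp·r` and `rp` are all `O(δ)` in the near region.
Consequently every power of `1 - p` that occurs lies within a factor close to one of `e^{-r}`:
`(1-p)^(n-2k) ≤ e^{2kp} e^{-r}` and `(1-p)^n ≥ e^{-np/(1-p)} ≥ e^{-2rp} e^{-r}`.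
The lower bounds come from the single outcomes `Y = 0`, `X = Y = 0` and `X = 1, Y = 0`.
For the upper bounds, `Pr(X = a) ≤ (kp)^a` and `Pr(Y = b) ≤ r^b (1-p)^(n-2k)` for `b ≤ k`
turn `p_0` and `p_-` into geometric series with ratios `kp·r` and `kp(1 + r)`. -/

open Finset Filter Topology

lemma binP_nonneg {m : ℕ} {p : ℝ} (hp0 : 0 ≤ p) (hp1 : p ≤ 1) (a : ℕ) : 0 ≤ binP m p a := by
  have : 0 ≤ 1 - p := by linarith
  unfold binP
  positivity

lemma binP_le_pow_mul_one_sub_pow {m : ℕ} {p : ℝ} (hp0 : 0 ≤ p) (hp1 : p ≤ 1) (b : ℕ) :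
    binP m p b ≤ (m * p) ^ b * (1 - p) ^ (m - b) := by
  have : 0 ≤ 1 - p := by linarith
  unfold binP
  rw [mul_pow]
  gcongr
  exact_mod_cast Nat.choose_le_pow m b

lemma binP_le_pow {m : ℕ} {p : ℝ} (hp0 : 0 ≤ p) (hp1 : p ≤ 1) (b : ℕ) :
    binP m p b ≤ (m * p) ^ b :=
  (binP_le_pow_mul_one_sub_pow hp0 hp1 b).trans <|
    mul_le_of_le_one_right (by positivity) (pow_le_one₀ (by linarith) (by linarith))

lemma binP_le_of_le {m n j b : ℕ} {p : ℝ} (hp0 : 0 ≤ p) (hp1 : p ≤ 1) (hmn : m ≤ n)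
    (hbj : b ≤ j) : binP m p b ≤ (n * p) ^ b * (1 - p) ^ (m - j) := by
  have hnp : 0 ≤ (n : ℝ) * p := mul_nonneg n.cast_nonneg hp0
  refine (binP_le_pow_mul_one_sub_pow hp0 hp1 b).trans <|
    mul_le_mul (by gcongr) (pow_le_pow_of_le_one (by linarith) (by linarith) (by omega))
      (pow_nonneg (by linarith) _) (pow_nonneg hnp _)

lemma sum_range_succ_pow_le_one_add_pow {r : ℝ} (hr : 0 ≤ r) (i : ℕ) :
    ∑ b ∈ range (i + 1), r ^ b ≤ (1 + r) ^ i := by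
  rw [add_comm 1 r, add_pow]
  refine sum_le_sum fun b hb => ?_
  rw [one_pow, mul_one]
  exact le_mul_of_one_le_right (by positivity)
    (by exact_mod_cast Nat.choose_pos (Nat.lt_succ_iff.mp (mem_range.mp hb)))

lemma geom_sum_le_one_div {x : ℝ} (hx0 : 0 ≤ x) (hx1 : x < 1) (k : ℕ) :
    ∑ i ∈ range k, x ^ i ≤ 1 / (1 - x) := by
  have := geom_sum_Ico_le_of_lt_one (m := 0) (n := k) hx0 hx1
  rwa [← range_eq_Ico, pow_zero] at this

lemma one_sub_pow_le_exp_neg {p : ℝ} (hp1 : p ≤ 1) (j : ℕ) :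
    (1 - p) ^ j ≤ Real.exp (-(j * p)) := by
  rw [← mul_neg, Real.exp_nat_mul]
  exact pow_le_pow_left₀ (by linarith) (Real.one_sub_le_exp_neg p) j

lemma exp_neg_div_le_one_sub_pow {p : ℝ} (hp1 : p < 1) (j : ℕ) :
    Real.exp (-(j * p / (1 - p))) ≤ (1 - p) ^ j := by
  have hq : 0 < 1 - p := by linarith
  have hlog : -(p / (1 - p)) ≤ Real.log (1 - p) := by
    convert Real.one_sub_inv_le_log_of_pos hq using 1
    field_simp
    ring
  calc Real.exp (-(j * p / (1 - p))) ≤ Real.exp (j * Real.log (1 - p)) := by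
        rw [Real.exp_le_exp, mul_div_assoc, ← mul_neg]
        exact mul_le_mul_of_nonneg_left hlog j.cast_nonneg
    _ = (1 - p) ^ j := by rw [Real.exp_nat_mul, Real.exp_log hq]

lemma pZero_eq_sum {n k : ℕ} (p : ℝ) (hkn : k ≤ n - k) :
    pZero n k p = ∑ a ∈ range (k + 1), binP k p a * binP (n - k) p a := by
  unfold pZero
  refine sum_congr rfl fun a ha => ?_
  rw [sum_ite_eq' (range (n - k + 1)) a (fun b => binP k p a * binP (n - k) p b),
    if_pos (mem_range.mpr (by rw [mem_range] at ha; omega))]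

lemma pMinus_eq_sum {n k : ℕ} (p : ℝ) (hkn : k ≤ n - k) :
    pMinus n k p = ∑ i ∈ range k, binP k p (i + 1) * ∑ b ∈ range (i + 1), binP (n - k) p b := by
  unfold pMinus
  rw [sum_range_succ']
  simp only [Nat.not_lt_zero, if_false, sum_const_zero, add_zero]
  refine sum_congr rfl fun i hi => ?_
  rw [mul_sum, ← sum_filter]
  congr 1
  ext b
  simp only [mem_filter, mem_range] at hi ⊢
  omega

lemma pPrime_eq (n k : ℕ) (p : ℝ) : pPrime n k p = (1 - p) ^ (n - k) := by
  simp [pPrime, binP]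

lemma one_sub_pow_le_pZero {n k : ℕ} {p : ℝ} (hp0 : 0 ≤ p) (hp1 : p ≤ 1) (hkn : k ≤ n - k) :
    (1 - p) ^ n ≤ pZero n k p := by
  rw [pZero_eq_sum p hkn]
  have h0 : binP k p 0 * binP (n - k) p 0 = (1 - p) ^ n := by
    simp only [binP, Nat.choose_zero_right, Nat.cast_one, pow_zero, one_mul, Nat.sub_zero,
      ← pow_add]
    congr 1
    omega
  rw [← h0]
  exact single_le_sum (fun a _ => mul_nonneg (binP_nonneg hp0 hp1 a) (binP_nonneg hp0 hp1 a))
    (mem_range.mpr k.succ_pos)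

lemma mul_one_sub_pow_le_pMinus {n k : ℕ} {p : ℝ} (hp0 : 0 ≤ p) (hp1 : p ≤ 1) (hk : 1 ≤ k)
    (hkn : k ≤ n - k) : k * p * (1 - p) ^ (n - 1) ≤ pMinus n k p := by
  rw [pMinus_eq_sum p hkn]
  have h0 : binP k p (0 + 1) * ∑ b ∈ range (0 + 1), binP (n - k) p b =
      k * p * (1 - p) ^ (n - 1) := by
    simp only [binP, zero_add, sum_range_one, Nat.choose_one_right, Nat.choose_zero_right,
      Nat.cast_one, pow_one, pow_zero, one_mul, Nat.sub_zero, mul_assoc, ← pow_add]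
    congr 3
    omega
  rw [← h0]
  exact single_le_sum (f := fun i => binP k p (i + 1) * ∑ b ∈ range (i + 1), binP (n - k) p b)
    (fun i _ => mul_nonneg (binP_nonneg hp0 hp1 _)
    (sum_nonneg fun b _ => binP_nonneg hp0 hp1 b)) (mem_range.mpr hk)

lemma pZero_le {n k : ℕ} {p : ℝ} (hp0 : 0 ≤ p) (hp1 : p ≤ 1) (hkn : k ≤ n - k)
    (hv : k * p * (n * p) < 1) :
    pZero n k p ≤ (1 - p) ^ (n - 2 * k) / (1 - k * p * (n * p)) := by
  have hQ : 0 ≤ (1 - p) ^ (n - 2 * k) := pow_nonneg (by linarith) _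
  rw [pZero_eq_sum p hkn]
  calc ∑ a ∈ range (k + 1), binP k p a * binP (n - k) p a
      ≤ ∑ a ∈ range (k + 1), (k * p * (n * p)) ^ a * (1 - p) ^ (n - 2 * k) := by
        refine sum_le_sum fun a ha => ?_
        have hbin := binP_le_of_le (m := n - k) (n := n) hp0 hp1 (Nat.sub_le n k)
          (Nat.lt_succ_iff.mp (mem_range.mp ha))
        rw [show n - k - k = n - 2 * k by omega] at hbin
        calc binP k p a * binP (n - k) p a
            ≤ (k * p) ^ a * ((n * p) ^ a * (1 - p) ^ (n - 2 * k)) :=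
              mul_le_mul (binP_le_pow hp0 hp1 a) hbin (binP_nonneg hp0 hp1 a) (by positivity)
          _ = (k * p * (n * p)) ^ a * (1 - p) ^ (n - 2 * k) := by ring
    _ = (∑ a ∈ range (k + 1), (k * p * (n * p)) ^ a) * (1 - p) ^ (n - 2 * k) :=
        (sum_mul ..).symm
    _ ≤ 1 / (1 - k * p * (n * p)) * (1 - p) ^ (n - 2 * k) :=
        mul_le_mul_of_nonneg_right (geom_sum_le_one_div (by positivity) hv _) hQ
    _ = (1 - p) ^ (n - 2 * k) / (1 - k * p * (n * p)) := by ring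

lemma pMinus_le {n k : ℕ} {p : ℝ} (hp0 : 0 ≤ p) (hp1 : p ≤ 1) (hkn : k ≤ n - k)
    (huv : k * p * (1 + n * p) < 1) :
    pMinus n k p ≤ k * p * (1 - p) ^ (n - 2 * k) / (1 - k * p * (1 + n * p)) := by
  have hQ : 0 ≤ (1 - p) ^ (n - 2 * k) := pow_nonneg (by linarith) _
  rw [pMinus_eq_sum p hkn]
  calc ∑ i ∈ range k, binP k p (i + 1) * ∑ b ∈ range (i + 1), binP (n - k) p b
      ≤ ∑ i ∈ range k, k * p * (1 - p) ^ (n - 2 * k) * (k * p * (1 + n * p)) ^ i := by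
        refine sum_le_sum fun i hi => ?_
        have hinner : ∑ b ∈ range (i + 1), binP (n - k) p b ≤
            (1 + n * p) ^ i * (1 - p) ^ (n - 2 * k) := by
          calc ∑ b ∈ range (i + 1), binP (n - k) p b
              ≤ ∑ b ∈ range (i + 1), (n * p) ^ b * (1 - p) ^ (n - 2 * k) := by
                refine sum_le_sum fun b hb => ?_
                have hbin := binP_le_of_le (m := n - k) (n := n) (j := k) (b := b) hp0 hp1
                  (Nat.sub_le n k) (by rw [mem_range] at hb hi; omega)
                rwa [show n - k - k = n - 2 * k by omega] at hbin
            _ = (∑ b ∈ range (i + 1), (n * p) ^ b) * (1 - p) ^ (n - 2 * k) := (sum_mul ..).symm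
            _ ≤ (1 + n * p) ^ i * (1 - p) ^ (n - 2 * k) :=
                mul_le_mul_of_nonneg_right (sum_range_succ_pow_le_one_add_pow (by positivity) i) hQ
        calc binP k p (i + 1) * ∑ b ∈ range (i + 1), binP (n - k) p b
            ≤ (k * p) ^ (i + 1) * ((1 + n * p) ^ i * (1 - p) ^ (n - 2 * k)) :=
              mul_le_mul (binP_le_pow hp0 hp1 _) hinner
                (sum_nonneg fun b _ => binP_nonneg hp0 hp1 b) (by positivity)
          _ = k * p * (1 - p) ^ (n - 2 * k) * (k * p * (1 + n * p)) ^ i := by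
              rw [mul_pow (k * p : ℝ), pow_succ]
              ring
    _ = k * p * (1 - p) ^ (n - 2 * k) * ∑ i ∈ range k, (k * p * (1 + n * p)) ^ i :=
        (mul_sum ..).symm
    _ ≤ k * p * (1 - p) ^ (n - 2 * k) * (1 / (1 - k * p * (1 + n * p))) :=
        mul_le_mul_of_nonneg_left (geom_sum_le_one_div (by positivity) huv _) (by positivity)
    _ = k * p * (1 - p) ^ (n - 2 * k) / (1 - k * p * (1 + n * p)) := by ring

lemma exp_neg_two_mul_mul_exp_neg_le_one_sub_pow {n : ℕ} {p r t : ℝ} (hp0 : 0 ≤ p)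
    (hp : p ≤ 1 / 2) (hnp : n * p = r) (hw : r * p ≤ t) :
    Real.exp (-(2 * t)) * Real.exp (-r) ≤ (1 - p) ^ n := by
  refine le_trans ?_ (exp_neg_div_le_one_sub_pow (by linarith) n)
  have hr : 0 ≤ r := hnp ▸ mul_nonneg n.cast_nonneg hp0
  have hdiv : r / (1 - p) ≤ r + 2 * t := by
    rw [div_le_iff₀ (by linarith)]
    nlinarith [mul_nonneg hr hp0]
  rw [← Real.exp_add, Real.exp_le_exp, hnp]
  linarith

lemma one_sub_pow_sub_two_mul_le {n k : ℕ} {p r t : ℝ} (hp1 : p ≤ 1) (hkn : 2 * k ≤ n)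
    (hnp : n * p = r) (hu : k * p ≤ t) :
    (1 - p) ^ (n - 2 * k) ≤ Real.exp (2 * t) * Real.exp (-r) := by
  refine (one_sub_pow_le_exp_neg hp1 _).trans ?_
  have hexp : ((n - 2 * k : ℕ) : ℝ) * p = r - 2 * (k * p) := by
    rw [Nat.cast_sub hkn, sub_mul, hnp]
    push_cast
    ring
  rw [← Real.exp_add, Real.exp_le_exp, hexp]
  linarith

section NearRegion

variable {n k : ℕ} {p r t : ℝ}

lemma pPrime_bounds (hp0 : 0 ≤ p) (hp : p ≤ 1 / 2) (ht : t < 1 / 2) (hkn : 2 * k ≤ n)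
    (hnp : n * p = r) (hu : k * p ≤ t) (hw : r * p ≤ t) :
    Real.exp (-(2 * t)) * Real.exp (-r) ≤ pPrime n k p ∧
      pPrime n k p ≤ Real.exp (2 * t) / (1 - 2 * t) * Real.exp (-r) := by
  have ht0 : 0 ≤ t := (mul_nonneg k.cast_nonneg hp0).trans hu
  rw [pPrime_eq]
  constructor
  · exact (exp_neg_two_mul_mul_exp_neg_le_one_sub_pow hp0 hp hnp hw).trans
      (pow_le_pow_of_le_one (by linarith) (by linarith) (Nat.sub_le n k))
  · calc (1 - p) ^ (n - k) ≤ (1 - p) ^ (n - 2 * k) :=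
          pow_le_pow_of_le_one (by linarith) (by linarith) (by omega)
      _ ≤ Real.exp (2 * t) * Real.exp (-r) := one_sub_pow_sub_two_mul_le (by linarith) hkn hnp hu
      _ ≤ Real.exp (2 * t) / (1 - 2 * t) * Real.exp (-r) := by
          gcongr
          exact le_div_self (Real.exp_pos _).le (by linarith) (by linarith)

lemma pZero_bounds (hp0 : 0 ≤ p) (hp : p ≤ 1 / 2) (ht : t < 1 / 2) (hkn : 2 * k ≤ n)
    (hnp : n * p = r) (hu : k * p ≤ t) (hv : k * p * r ≤ t) (hw : r * p ≤ t) :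
    Real.exp (-(2 * t)) * Real.exp (-r) ≤ pZero n k p ∧
      pZero n k p ≤ Real.exp (2 * t) / (1 - 2 * t) * Real.exp (-r) := by
  have ht0 : 0 ≤ t := (mul_nonneg k.cast_nonneg hp0).trans hu
  constructor
  · exact (exp_neg_two_mul_mul_exp_neg_le_one_sub_pow hp0 hp hnp hw).trans
      (one_sub_pow_le_pZero hp0 (by linarith) (by omega))
  · calc pZero n k p ≤ (1 - p) ^ (n - 2 * k) / (1 - k * p * r) := by
          simpa only [hnp] using pZero_le (n := n) (k := k) hp0 (by linarith) (by omega)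
            (by rw [hnp]; linarith)
      _ ≤ Real.exp (2 * t) * Real.exp (-r) / (1 - 2 * t) :=
          div_le_div₀ (by positivity) (one_sub_pow_sub_two_mul_le (by linarith) hkn hnp hu)
            (by linarith) (by linarith)
      _ = Real.exp (2 * t) / (1 - 2 * t) * Real.exp (-r) := by ring

lemma pMinus_bounds (hp0 : 0 ≤ p) (hp : p ≤ 1 / 2) (ht : t < 1 / 2) (hk : 1 ≤ k)
    (hkn : 2 * k ≤ n) (hnp : n * p = r) (hu : k * p ≤ t) (hv : k * p * r ≤ t) (hw : r * p ≤ t) :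
    Real.exp (-(2 * t)) * (k * p * Real.exp (-r)) ≤ pMinus n k p ∧
      pMinus n k p ≤ Real.exp (2 * t) / (1 - 2 * t) * (k * p * Real.exp (-r)) := by
  have hu0 : 0 ≤ (k : ℝ) * p := mul_nonneg k.cast_nonneg hp0
  constructor
  · calc Real.exp (-(2 * t)) * (k * p * Real.exp (-r))
        = k * p * (Real.exp (-(2 * t)) * Real.exp (-r)) := by ring
      _ ≤ k * p * (1 - p) ^ (n - 1) := by
          gcongr
          exact (exp_neg_two_mul_mul_exp_neg_le_one_sub_pow hp0 hp hnp hw).trans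
            (pow_le_pow_of_le_one (by linarith) (by linarith) (Nat.sub_le n 1))
      _ ≤ pMinus n k p := mul_one_sub_pow_le_pMinus hp0 (by linarith) hk (by omega)
  · have huv : (k : ℝ) * p * (1 + r) ≤ 2 * t := by linarith
    calc pMinus n k p ≤ k * p * (1 - p) ^ (n - 2 * k) / (1 - k * p * (1 + r)) := by
          simpa only [hnp] using pMinus_le (n := n) (k := k) hp0 (by linarith) (by omega)
            (by rw [hnp]; linarith)
      _ ≤ k * p * (Real.exp (2 * t) * Real.exp (-r)) / (1 - 2 * t) := by
          gcongr
          · linarith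
          · exact one_sub_pow_sub_two_mul_le (by linarith) hkn hnp hu
      _ = Real.exp (2 * t) / (1 - 2 * t) * (k * p * Real.exp (-r)) := by ring

end NearRegion

lemma small_parameters_of_near_region {n lam k : ℕ} {r δ : ℝ} (hδ0 : 0 ≤ δ) (hδ1 : δ ≤ 1)
    (hlam : 6 ≤ (lam : ℝ)) (hk : 0 < k) (hk_lam : (k : ℝ) ≤ 3 * n / lam) (hr : 0 < r)
    (hr_lam : r ≤ δ * (lam : ℝ) ^ ((1 : ℝ) / 4)) :
    2 * k ≤ n ∧ r / n ≤ 3 * δ ∧ k * (r / n) ≤ 3 * δ ∧ k * (r / n) * r ≤ 3 * δ ∧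
      r * (r / n) ≤ 3 * δ := by
  have hk1 : (1 : ℝ) ≤ k := by exact_mod_cast hk
  have hklam : (k : ℝ) * lam ≤ 3 * n := (le_div_iff₀ (by linarith)).mp hk_lam
  have hlam_n : (lam : ℝ) ≤ 3 * n := by nlinarith
  have h2kn : (2 * k : ℝ) ≤ n := by nlinarith
  have hn : (0 : ℝ) < n := by linarith
  set s := (lam : ℝ) ^ ((1 : ℝ) / 4)
  have hs4 : s ^ 4 = lam := by
    rw [← Real.rpow_natCast, ← Real.rpow_mul (by linarith)]
    norm_num
  have hs1 : 1 ≤ s := Real.one_le_rpow (by linarith) (by norm_num)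
  -- `r ≤ δ s` with `s ≥ 1` and `s ^ 4 = λ` gives `r ≤ δ λ` and `r ^ 2 ≤ δ ^ 2 λ ≤ δ λ`.
  have hr_lin : r ≤ δ * lam := by nlinarith [pow_le_pow_right₀ hs1 (show 1 ≤ 4 by norm_num)]
  have hr_sq : r * r ≤ δ * lam := by
    have : r * r ≤ δ ^ 2 * s ^ 2 := by nlinarith
    nlinarith [pow_le_pow_right₀ hs1 (show 2 ≤ 4 by norm_num)]
  refine ⟨by exact_mod_cast h2kn, ?_, ?_, ?_, ?_⟩
  · rw [div_le_iff₀ hn]; nlinarith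
  · rw [← mul_div_assoc, div_le_iff₀ hn]; nlinarith
  · rw [← mul_div_assoc, div_mul_eq_mul_div, div_le_iff₀ hn]; nlinarith
  · rw [← mul_div_assoc, div_le_iff₀ hn]; nlinarith

lemma exists_exp_factors_near_one {ε : ℝ} (hε : 0 < ε) :
    ∃ t : ℝ, 0 < t ∧ t < 1 / 2 ∧ 1 - ε < Real.exp (-(2 * t)) ∧
      Real.exp (2 * t) / (1 - 2 * t) < 1 + ε := by
  have hL : Tendsto (fun t : ℝ => Real.exp (-(2 * t))) (𝓝 0) (𝓝 1) := by
    simpa using (by fun_prop : Continuous fun t : ℝ => Real.exp (-(2 * t))).tendsto 0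
  have hU : Tendsto (fun t : ℝ => Real.exp (2 * t) / (1 - 2 * t)) (𝓝 0) (𝓝 1) := by
    have hcont : ContinuousAt (fun t : ℝ => Real.exp (2 * t) / (1 - 2 * t)) 0 := by
      fun_prop (disch := norm_num)
    simpa using hcont.tendsto
  have hnear : ∀ᶠ t in 𝓝[>] (0 : ℝ), (0 < t ∧ t < 1 / 2) ∧ 1 - ε < Real.exp (-(2 * t)) ∧
      Real.exp (2 * t) / (1 - 2 * t) < 1 + ε :=
    (eventually_mem_nhdsWithin.and (nhdsWithin_le_nhds (eventually_lt_nhds (by norm_num)))).and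
      (nhdsWithin_le_nhds ((hL.eventually (lt_mem_nhds (by linarith))).and
        (hU.eventually (gt_mem_nhds (by linarith)))))
  obtain ⟨t, ⟨ht0, ht⟩, hLt, hUt⟩ := hnear.exists
  exact ⟨t, ht0, ht, hLt, hUt⟩

lemma lt_and_lt_of_factor_bounds {P X L U ε : ℝ} (hX : 0 < X) (hL : 1 - ε < L) (hU : U < 1 + ε)
    (hP : L * X ≤ P ∧ P ≤ U * X) : (1 - ε) * X < P ∧ P < (1 + ε) * X :=
  ⟨(mul_lt_mul_of_pos_right hL hX).trans_le hP.1, hP.2.trans_lt (mul_lt_mul_of_pos_right hU hX)⟩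

/-- For every `c > 0` and `ε > 0` there are `C, δ, n0 > 0` such
that for all `n ≥ n0`, all `λ` with `C ln n ≤ λ ≤ n^c`, all `k` with
`0 < k ≤ 3n/λ` and all `r` with `0 < r ≤ δ·λ^{1/4}`, with `p = r/n`:
`(1−ε)(kr/n)e^{−r} < p_-(r) < (1+ε)(kr/n)e^{−r}`,
`(1−ε)e^{−r} < p_0(r) < (1+ε)e^{−r}`, and `(1−ε)e^{−r} < p'(r) < (1+ε)e^{−r}`. -/
theorem progress_probabilities_near_region :
    ∀ c : ℝ, 0 < c → ∀ ε : ℝ, 0 < ε →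
      ∃ C δ n0 : ℝ, 0 < C ∧ 0 < δ ∧ 0 < n0 ∧
        ∀ n lam k : ℕ, n0 ≤ (n : ℝ) →
          C * Real.log n ≤ (lam : ℝ) → (lam : ℝ) ≤ (n : ℝ) ^ c →
          0 < k → (k : ℝ) ≤ 3 * n / lam →
          ∀ r : ℝ, 0 < r → r ≤ δ * (lam : ℝ) ^ ((1 : ℝ) / 4) →
            ((1 - ε) * ((k : ℝ) * r / n) * Real.exp (-r) < pMinus n k (r / n) ∧
              pMinus n k (r / n) < (1 + ε) * ((k : ℝ) * r / n) * Real.exp (-r)) ∧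
            ((1 - ε) * Real.exp (-r) < pZero n k (r / n) ∧
              pZero n k (r / n) < (1 + ε) * Real.exp (-r)) ∧
            ((1 - ε) * Real.exp (-r) < pPrime n k (r / n) ∧
              pPrime n k (r / n) < (1 + ε) * Real.exp (-r)) := by
  intro _ _ ε hε
  obtain ⟨t, ht0, ht, hL, hU⟩ := exists_exp_factors_near_one hε
  refine ⟨6, t / 3, Real.exp 1, by norm_num, by positivity, Real.exp_pos 1, ?_⟩
  intro n lam k hn hlam_log _ hk hk_lam r hr hr_lam
  have hlam : 6 ≤ (lam : ℝ) := by
    have : 1 ≤ Real.log n := (Real.le_log_iff_exp_le (by linarith [Real.exp_pos 1])).mpr hn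
    linarith
  obtain ⟨hkn, hp, hu, hv, hw⟩ :=
    small_parameters_of_near_region (by positivity) (by linarith) hlam hk hk_lam hr hr_lam
  rw [show 3 * (t / 3) = t by ring] at hp hu hv hw
  have hn0 : (0 : ℝ) < n := by exact_mod_cast (by omega : 0 < n)
  have hnp : (n : ℝ) * (r / n) = r := mul_div_cancel₀ r hn0.ne'
  have hp0 : 0 ≤ r / n := by positivity
  have hp2 : r / n ≤ 1 / 2 := by linarith
  have hX := Real.exp_pos (-r)
  rw [mul_div_assoc]
  refine ⟨?_, ?_, ?_⟩
  · simpa only [mul_assoc] using lt_and_lt_of_factor_bounds (by positivity) hL hU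
      (pMinus_bounds hp0 hp2 ht hk hkn hnp hu hv hw)
  · exact lt_and_lt_of_factor_bounds hX hL hU (pZero_bounds hp0 hp2 ht hkn hnp hu hv hw)
  · exact lt_and_lt_of_factor_bounds hX hL hU (pPrime_bounds hp0 hp2 ht hkn hnp hu hw)

end BinomialEstimates
end

section
/- Consider a stochastic process (X_t)_{t≥0} on ℝ adapted to a filtration (F_t) such that for some p ≤ 1/25 the transition probabilities satisfy, for all t ≥ 0: Pr(X_{t+1} ≥ X_t + a | F_t) ≤ p^{a+1} on the event {X_t > 1} for all a ≥ −1/2, and Pr(X_{t+1} ≥ a + 1 | F_t) ≤ p^{a+1} on the event {X_t ≤ 1} for all a ≥ 0. If X_0 ≤ 1, then for all t ≥ 1 and all k > 1 it holds that Pr(X_t ≥ 1 + k) ≤ 11·(e·p)^k. -/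
/-!
Write `E = e·p`. By induction on `t`, every `X_t` satisfies `Pr(X_t ≥ 1 + a) ≤ 11 E^a` for all
`a ≥ 0`; for `t = 0` this holds because `X_0 ≤ 1`. For the step, split `{X_{t+1} ≥ 1 + a}`
according to the value of `X_t`: on `{X_t ≤ 1}` the jump bound gives `p^{a+1}`, the event
`{X_t ≥ 1 + a + 1/2}` costs `11 E^{a+1/2}` by induction, and the rest of `(1, 1 + a + 1/2)` is
cut into the half-unit slabs `[1 + a - j/2, 1 + a + 1/2 - j/2)`. Leaving slab `j` for
`[1 + a, ∞)` takes a jump of at least `(j - 1)/2`, of probability at most `p^{(j+1)/2}`, so the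
slabs contribute a geometric series of ratio `e^{-1/2}`, and `p ≤ 1/25` keeps the total below
`11 E^a`.
-/

open MeasureTheory

open Real in
lemma rpow_half_mul_rpow_sub_half_eq {p : ℝ} (hp : 0 < p) (a : ℝ) (j : ℕ) :
    p ^ (((j : ℝ) + 1) / 2) * (exp 1 * p) ^ (a - j / 2) =
      (exp 1 * p) ^ a * √p * exp (-(1 / 2)) ^ j := by
  have hE : 0 < exp 1 * p := by positivity
  have hpj : 0 < p ^ ((j : ℝ) / 2) := by positivity
  have hsplit : p ^ (((j : ℝ) + 1) / 2) = √p * p ^ ((j : ℝ) / 2) := by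
    rw [sqrt_eq_rpow, ← rpow_add hp]; ring_nf
  have hEj : (exp 1 * p) ^ ((j : ℝ) / 2) = exp (j / 2) * p ^ ((j : ℝ) / 2) := by
    rw [mul_rpow (exp_pos 1).le hp.le, exp_one_rpow]
  rw [hsplit, rpow_sub hE, hEj, ← exp_nat_mul]
  field_simp
  rw [← exp_add]; ring_nf; simp

open Real in
lemma exp_neg_half_le_two_thirds : exp (-(1 / 2)) ≤ 2 / 3 := by
  rw [exp_neg, inv_le_comm₀ (exp_pos _) (by norm_num)]
  linarith [add_one_le_exp (1 / 2 : ℝ)]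

open Real Finset in
lemma sum_rpow_half_mul_rpow_sub_half_le {p : ℝ} (hp : 0 < p) (a : ℝ) (J : ℕ) :
    ∑ j ∈ range J, p ^ (((j : ℝ) + 1) / 2) * (exp 1 * p) ^ (a - j / 2) ≤
      3 * (exp 1 * p) ^ a * √p := by
  simp_rw [rpow_half_mul_rpow_sub_half_eq hp, ← mul_sum, range_eq_Ico]
  have hr := exp_neg_half_le_two_thirds
  have hgeom := geom_sum_Ico_le_of_lt_one (m := 0) (n := J) (exp_pos (-(1 / 2))).le (by linarith)
  have : exp (-(1 / 2)) ^ 0 / (1 - exp (-(1 / 2))) ≤ 3 := by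
    rw [pow_zero, div_le_iff₀ (by linarith)]; linarith
  have : 0 ≤ (exp 1 * p) ^ a * √p := by positivity
  nlinarith

open Real Finset in
lemma tail_recursion_le {p : ℝ} (hp0 : 0 ≤ p) (hp : p ≤ 1 / 25) {a : ℝ} (ha : 0 ≤ a)
    {J : ℕ} (hJ : 2 * a ≤ J) :
    p ^ (a + 1) + 11 * (exp 1 * p) ^ (a + 1 / 2)
      + ∑ j ∈ range J, p ^ (((j : ℝ) + 1) / 2) * (11 * (exp 1 * p) ^ (a - j / 2))
      + p ^ (((J : ℝ) + 1) / 2) ≤ 11 * (exp 1 * p) ^ a := by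
  rcases hp0.eq_or_lt with rfl | hp0
  · have hzero : ∀ x : ℝ, 0 < x → (0 : ℝ) ^ x = 0 := fun x hx => zero_rpow hx.ne'
    rw [mul_zero, hzero _ (by positivity), hzero _ (by positivity), hzero _ (by positivity),
      sum_eq_zero fun j _ => by rw [hzero _ (by positivity), zero_mul]]
    simp [rpow_nonneg]
  set E := exp 1 * p
  have hE : 0 < E := by positivity
  have hpE : p ^ a ≤ E ^ a :=
    rpow_le_rpow hp0.le (le_mul_of_one_le_left hp0.le (by linarith [add_one_le_exp (1 : ℝ)])) ha
  have hEa : 0 < E ^ a := by positivity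
  have hsqrt_p : √p ≤ 1 / 5 := by
    rw [sqrt_le_left (by norm_num)]; linarith
  have hsqrt_E : √E ≤ 0.33 := by
    rw [sqrt_le_left (by norm_num)]; nlinarith [exp_one_lt_d9]
  have hsum := sum_rpow_half_mul_rpow_sub_half_le hp0 a J
  have hsum11 : ∑ j ∈ range J, p ^ (((j : ℝ) + 1) / 2) * (11 * E ^ (a - j / 2)) =
      11 * ∑ j ∈ range J, p ^ (((j : ℝ) + 1) / 2) * E ^ (a - j / 2) := by
    rw [mul_sum]; exact sum_congr rfl fun j _ => by ring
  have hfirst : p ^ (a + 1) ≤ E ^ a * p := by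
    rw [rpow_add_one hp0.ne']; gcongr
  have hsecond : E ^ (a + 1 / 2) = E ^ a * √E := by rw [rpow_add hE, sqrt_eq_rpow]
  have hlast : p ^ (((J : ℝ) + 1) / 2) ≤ E ^ a * √p :=
    calc p ^ (((J : ℝ) + 1) / 2) ≤ p ^ (a + 1 / 2) :=
          rpow_le_rpow_of_exponent_ge hp0 (by linarith) (by linarith)
      _ = p ^ a * √p := by rw [rpow_add hp0, sqrt_eq_rpow]
      _ ≤ E ^ a * √p := by gcongr
  rw [hsum11, hsecond]
  -- `1/25 + 11 · 0.33 + 11 · 3/5 + 1/5 < 11`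
  nlinarith

open Set in
lemma exists_le_ceil_mem_Ico_half {a y : ℝ} (h1 : 1 < y) (h2 : y < 1 + a + 1 / 2) :
    ∃ j ≤ ⌈2 * a⌉₊, y ∈ Ico (1 + a - j / 2) (1 + a + 1 / 2 - j / 2) := by
  refine ⟨⌈2 * (1 + a - y)⌉₊, Nat.ceil_mono (by linarith), ?_, ?_⟩
  · linarith [Nat.le_ceil (2 * (1 + a - y))]
  · rcases le_or_gt 0 (2 * (1 + a - y)) with h | h
    · linarith [Nat.ceil_lt_add_one h]
    · rw [Nat.ceil_eq_zero.mpr h.le]; push_cast; linarith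

section

open Set

variable {Ω : Type*} {m m0 : MeasurableSpace Ω} {μ : Measure Ω}

lemma measureReal_inter_le_of_condExp_indicator_le [IsFiniteMeasure μ] (hm : m ≤ m0)
    {A B : Set Ω} (hA : MeasurableSet[m] A) (hB : MeasurableSet B) {c : ℝ}
    (h : ∀ᵐ ω ∂μ, ω ∈ A → μ[B.indicator (fun _ => (1 : ℝ)) | m] ω ≤ c) :
    μ.real (A ∩ B) ≤ c * μ.real A := by
  have hint : Integrable (B.indicator fun _ => (1 : ℝ)) μ := (integrable_const 1).indicator hB
  calc μ.real (A ∩ B) = ∫ ω in A, B.indicator (fun _ => (1 : ℝ)) ω ∂μ := by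
        rw [setIntegral_indicator hB, setIntegral_const, smul_eq_mul, mul_one]
    _ = ∫ ω in A, μ[B.indicator (fun _ => (1 : ℝ)) | m] ω ∂μ :=
        (setIntegral_condExp hm hint hA).symm
    _ ≤ ∫ _ in A, c ∂μ :=
        setIntegral_mono_ae_restrict integrable_condExp.integrableOn
          (integrableOn_const (measure_ne_top _ _)) ((ae_restrict_iff' (hm A hA)).2 h)
    _ = c * μ.real A := by rw [setIntegral_const, smul_eq_mul, mul_comm]

def HasExpTail (μ : Measure Ω) (p : ℝ) (Y : Ω → ℝ) : Prop :=
  ∀ a : ℝ, 0 ≤ a → μ.real {ω | 1 + a ≤ Y ω} ≤ 11 * (Real.exp 1 * p) ^ a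

lemma hasExpTail_of_ae_le_one [IsProbabilityMeasure μ] {p : ℝ} (hp : 0 ≤ p) {Y : Ω → ℝ}
    (hY : ∀ᵐ ω ∂μ, Y ω ≤ 1) : HasExpTail μ p Y := by
  intro a ha
  rcases ha.eq_or_lt with rfl | ha
  · rw [Real.rpow_zero]; linarith [measureReal_le_one (μ := μ) (s := {ω | 1 + 0 ≤ Y ω})]
  · have hnull : μ.real {ω | 1 + a ≤ Y ω} = 0 :=
      (measureReal_eq_zero_iff).2 <| measure_mono_null (fun ω hω => by
        simp only [mem_ofPred_eq] at hω ⊢; linarith) (ae_iff.1 hY)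
    rw [hnull]; positivity

def halfUnitSlab (Y : Ω → ℝ) (a : ℝ) (j : ℕ) : Set Ω :=
  Y ⁻¹' (Set.Ioi 1 ∩ Set.Ico (1 + a - j / 2) (1 + a + 1 / 2 - j / 2))

variable {Y Z : Ω → ℝ} {p : ℝ}

lemma measureReal_halfUnitSlab_inter_le [IsFiniteMeasure μ] (hm : m ≤ m0) (hY : Measurable[m] Y)
    (hZ : Measurable Z)
    (hstep : ∀ a : ℝ, -(1 / 2) ≤ a → ∀ᵐ ω ∂μ, 1 < Y ω →
      μ[{ω' | Y ω' + a ≤ Z ω'}.indicator (fun _ => (1 : ℝ)) | m] ω ≤ p ^ (a + 1))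
    (a : ℝ) (j : ℕ) :
    μ.real (halfUnitSlab Y a j ∩ {ω | a + 1 ≤ Z ω}) ≤
      p ^ (((j : ℝ) + 1) / 2) * μ.real (halfUnitSlab Y a j) := by
  have hjump : -(1 / 2) ≤ ((j : ℝ) - 1) / 2 := by
    linarith [(Nat.cast_nonneg j : (0 : ℝ) ≤ j)]
  have hsub : halfUnitSlab Y a j ∩ {ω | a + 1 ≤ Z ω} ⊆
      halfUnitSlab Y a j ∩ {ω | Y ω + ((j : ℝ) - 1) / 2 ≤ Z ω} := by
    rintro ω ⟨hω, hZω⟩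
    simp only [halfUnitSlab, mem_inter_iff, mem_preimage, mem_Ico, mem_ofPred_eq] at hω hZω ⊢
    exact ⟨hω, by linarith⟩
  refine (measureReal_mono hsub).trans <| measureReal_inter_le_of_condExp_indicator_le hm
    (hY (measurableSet_Ioi.inter measurableSet_Ico))
    (measurableSet_le ((hY.mono hm le_rfl).add_const _) hZ) ?_
  filter_upwards [hstep _ hjump] with ω hω hslab
  convert hω hslab.1 using 2; ring

variable [IsProbabilityMeasure μ]

open Finset in
lemma HasExpTail.succ (hm : m ≤ m0) (hY : Measurable[m] Y) (hZ : Measurable Z)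
    (hp0 : 0 ≤ p) (hp : p ≤ 1 / 25)
    (hstep : ∀ a : ℝ, -(1 / 2) ≤ a → ∀ᵐ ω ∂μ, 1 < Y ω →
      μ[{ω' | Y ω' + a ≤ Z ω'}.indicator (fun _ => (1 : ℝ)) | m] ω ≤ p ^ (a + 1))
    (hjump : ∀ a : ℝ, 0 ≤ a → ∀ᵐ ω ∂μ, Y ω ≤ 1 →
      μ[{ω' | a + 1 ≤ Z ω'}.indicator (fun _ => (1 : ℝ)) | m] ω ≤ p ^ (a + 1))
    (hYtail : HasExpTail μ p Y) : HasExpTail μ p Z := by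
  intro a ha
  set J := ⌈2 * a⌉₊
  simp_rw [add_comm 1 a]
  set B := {ω | a + 1 ≤ Z ω}
  have hcover : B ⊆ ({ω | Y ω ≤ 1} ∩ B) ∪ {ω | 1 + (a + 1 / 2) ≤ Y ω} ∪
      ⋃ j ∈ range (J + 1), halfUnitSlab Y a j ∩ B := by
    intro ω hω
    rcases le_or_gt (Y ω) 1 with h1 | h1
    · exact Or.inl (Or.inl ⟨h1, hω⟩)
    rcases le_or_gt (1 + (a + 1 / 2)) (Y ω) with h2 | h2
    · exact Or.inl (Or.inr h2)
    obtain ⟨j, hj, hmem⟩ := exists_le_ceil_mem_Ico_half (a := a) h1 (by linarith)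
    exact Or.inr (mem_biUnion (mem_range.2 (Nat.lt_succ_of_le hj)) ⟨⟨h1, hmem⟩, hω⟩)
  have hlow : μ.real ({ω | Y ω ≤ 1} ∩ B) ≤ p ^ (a + 1) := by
    refine (measureReal_inter_le_of_condExp_indicator_le hm (measurableSet_le hY measurable_const)
      (measurableSet_le measurable_const hZ) (hjump a ha)).trans ?_
    exact mul_le_of_le_one_right (Real.rpow_nonneg hp0 _) measureReal_le_one
  have hslab : ∀ j < J, μ.real (halfUnitSlab Y a j) ≤ 11 * (Real.exp 1 * p) ^ (a - j / 2) := by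
    intro j hj
    refine (measureReal_mono fun ω hω => ?_).trans (hYtail _ ?_)
    · simp only [halfUnitSlab, Set.mem_preimage, Set.mem_inter_iff, Set.mem_Ico,
        mem_ofPred_eq] at hω ⊢
      linarith
    · have : (j : ℝ) + 1 ≤ J := by exact_mod_cast hj
      linarith [Nat.lt_ceil.1 hj]
  calc μ.real B
      ≤ μ.real ({ω | Y ω ≤ 1} ∩ B) + μ.real {ω | 1 + (a + 1 / 2) ≤ Y ω} +
          ∑ j ∈ range (J + 1), μ.real (halfUnitSlab Y a j ∩ B) :=
        (measureReal_mono hcover).trans <| (measureReal_union_le _ _).trans <|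
          add_le_add (measureReal_union_le _ _) (measureReal_biUnion_finset_le _ _)
    _ ≤ p ^ (a + 1) + 11 * (Real.exp 1 * p) ^ (a + 1 / 2) +
          ∑ j ∈ range (J + 1), p ^ (((j : ℝ) + 1) / 2) * μ.real (halfUnitSlab Y a j) := by
        gcongr with j
        · exact hYtail _ (by positivity)
        · exact measureReal_halfUnitSlab_inter_le hm hY hZ hstep a j
    _ ≤ p ^ (a + 1) + 11 * (Real.exp 1 * p) ^ (a + 1 / 2) +
          (∑ j ∈ range J, p ^ (((j : ℝ) + 1) / 2) * (11 * (Real.exp 1 * p) ^ (a - j / 2)) +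
            p ^ (((J : ℝ) + 1) / 2)) := by
        rw [sum_range_succ]
        gcongr with j hj
        · exact hslab j (mem_range.1 hj)
        · exact mul_le_of_le_one_right (Real.rpow_nonneg hp0 _) measureReal_le_one
    _ ≤ 11 * (Real.exp 1 * p) ^ a := by
        linarith [tail_recursion_le hp0 hp ha (Nat.le_ceil (2 * a))]

end

/-- **occupation probabilities, Lemma 5.** Let `(X_t)` be a real-valued
process adapted to a filtration `(ℱ_t)` on a probability space such that for some
`p ≤ 1/25`: almost surely, on the event `{X_t > 1}` one has
`Pr(X_{t+1} ≥ X_t + a | ℱ_t) ≤ p^{a+1}` for all `a ≥ −1/2`, and on the event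
`{X_t ≤ 1}` one has `Pr(X_{t+1} ≥ a + 1 | ℱ_t) ≤ p^{a+1}` for all `a ≥ 0`.
If `X_0 ≤ 1` a.s., then for all `t ≥ 1` and all `k > 1`,
`Pr(X_t ≥ 1 + k) ≤ 11·(e·p)^k`. -/
theorem occupation_probability_strong_drift
    {Ω : Type*} {m0 : MeasurableSpace Ω} {μ : Measure Ω} [IsProbabilityMeasure μ]
    (ℱ : Filtration ℕ m0) (X : ℕ → Ω → ℝ) (hadp : Adapted ℱ X)
    (p : ℝ) (hp0 : 0 ≤ p) (hp : p ≤ 1 / 25)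
    (htrans1 : ∀ t : ℕ, ∀ a : ℝ, -(1 / 2) ≤ a →
      ∀ᵐ ω ∂μ, 1 < X t ω →
        (μ[Set.indicator {ω' | X t ω' + a ≤ X (t + 1) ω'} (fun _ => (1 : ℝ)) | ℱ t]) ω ≤
          p ^ (a + 1))
    (htrans2 : ∀ t : ℕ, ∀ a : ℝ, 0 ≤ a →
      ∀ᵐ ω ∂μ, X t ω ≤ 1 →
        (μ[Set.indicator {ω' | a + 1 ≤ X (t + 1) ω'} (fun _ => (1 : ℝ)) | ℱ t]) ω ≤
          p ^ (a + 1))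
    (hX0 : ∀ᵐ ω ∂μ, X 0 ω ≤ 1) :
    ∀ t : ℕ, 1 ≤ t → ∀ k : ℝ, 1 < k →
      μ {ω | 1 + k ≤ X t ω} ≤ ENNReal.ofReal (11 * (Real.exp 1 * p) ^ k) := by
  have htail : ∀ t, HasExpTail μ p (X t) := by
    intro t
    induction t with
    | zero => exact hasExpTail_of_ae_le_one hp0 hX0
    | succ t ih =>
      exact ih.succ (ℱ.le t) (hadp t) ((hadp (t + 1)).mono (ℱ.le _) le_rfl) hp0 hp
        (htrans1 t) (htrans2 t)
  intro t _ k hk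
  rw [← ofReal_measureReal]
  exact ENNReal.ofReal_le_ofReal (htail t k (by linarith))
end
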